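/- For positive integers k, b, s, the sum over tuples of proper divisors (l_1,...,l_s) of k (l_i | k, l_i ≠ k) of N_k(b; l_1,...,l_s)·t^{ks − (l_1+...+l_s)} equals (1/k) Σ_{d|k} c(b,d)·(β_{k,d}(t))^s. -/

import Mathlib

open Finset

/-- Ramanujan sum. -/
noncomputable def ramc (n k : ℕ) : ℂ :=
  ∑ m ∈ (Finset.Icc 1 k).filter (fun m => Nat.gcd m k = 1),
    Complex.exp (2 * Real.pi * Complex.I * m * n / k)

/-- Harer–Zagier polynomial `β_{k,d}(t) = Σ_{r=1}^{k-1} e^{2πir/d} t^{k-gcd(k,r)}`. -/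
noncomputable def hz (k d : ℕ) (t : ℂ) : ℂ :=
  ∑ r ∈ Finset.Icc 1 (k - 1),
    Complex.exp (2 * Real.pi * Complex.I * r / d) * t ^ (k - Nat.gcd k r)

/-- `N_k(b; l_1,…,l_s)`. -/
noncomputable def Nk (k b s : ℕ) [NeZero k] (l : Fin s → ℕ) : ℕ :=
  Fintype.card {x : Fin s → ZMod k //
    (∑ i, x i) = (b : ZMod k) ∧ ∀ i, Nat.gcd (x i).val k = l i}

/-!
Write `N_k(b; l)` as a count of tuples `x ∈ (ZMod k)^s` with `∑ xᵢ = b` and `gcd(xᵢ, k) = lᵢ`;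
the left side becomes `∑_{∑ xᵢ = b} ∏ w(xᵢ)` with `w(x) = t^(k - gcd(x, k))` for `x ≠ 0`
and `w(0) = 0`. Detecting `∑ xᵢ = b` with the additive characters `ψ(m ·)` of `ZMod k` turns
this into `k⁻¹ ∑_m ψ(m b) (∑_z ψ(-m z) w(z))^s`. Since `w` is invariant under units and every
`m` is a unit times `g = gcd(m, k)`, the inner sum is `β_{k, k/g}(t)`. Grouping the `m` by `g`,
what remains is `∑_{gcd(m, k) = g} ψ(m b)`, which is the Ramanujan sum `c(b, k/g)`.
-/

open ZMod

lemma AddChar.map_sum_eq_prod {A M ι : Type*} [AddCommMonoid A] [CommMonoid M]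
    (ψ : AddChar A M) (s : Finset ι) (f : ι → A) :
    ψ (∑ i ∈ s, f i) = ∏ i ∈ s, ψ (f i) := by
  induction s using Finset.cons_induction <;> simp [AddChar.map_add_eq_mul, *]

lemma Finset.sum_Icc_one_eq_sum_range {M : Type*} [AddCancelCommMonoid M] (f : ℕ → M) {d : ℕ}
    (h : f d = f 0) : ∑ j ∈ Icc 1 d, f j = ∑ j ∈ range d, f j := by
  have hsplit := sum_Ico_succ_top (Nat.zero_le d) f
  rw [sum_eq_sum_Ico_succ_bot d.succ_pos, h, add_comm] at hsplit
  rw [← Ico_add_one_right_eq_Icc, range_eq_Ico]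
  exact add_right_cancel hsplit

lemma Finset.prod_pow_sub_eq_pow_mul_card_sub_sum {M ι : Type*} [CommMonoid M] [Fintype ι]
    (t : M) {k : ℕ} (l : ι → ℕ) (hl : ∀ i, l i ≤ k) :
    ∏ i, t ^ (k - l i) = t ^ (k * Fintype.card ι - ∑ i, l i) := by
  rw [prod_pow_eq_pow_sum, sum_tsub_distrib _ fun i _ => hl i, sum_const, card_univ, smul_eq_mul,
    mul_comm]

lemma AddChar.sum_unit_mul_mul {R M : Type*} [CommRing R] [Fintype R] [CommSemiring M]
    (ψ : AddChar R M) {w : R → M} (hw : ∀ (u : Rˣ) z, w (u * z) = w z) (u : Rˣ) (m : R) :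
    ∑ z, ψ (u * m * z) * w z = ∑ z, ψ (m * z) * w z :=
  Fintype.sum_equiv (Units.mulLeft u) _ _ fun z => by
    rw [Units.mulLeft_apply, hw, mul_assoc, mul_left_comm m]

namespace ZMod

variable {k : ℕ}

lemma gcd_val_unit_mul (u : (ZMod k)ˣ) (x : ZMod k) :
    ((u : ZMod k) * x).val.gcd k = x.val.gcd k := by
  rw [val_mul, ← Nat.gcd_rec, Nat.gcd_comm k]
  exact Nat.Coprime.gcd_mul_left_cancel _ (val_coe_unit_coprime u)

lemma gcd_val_neg (x : ZMod k) : (-x).val.gcd k = x.val.gcd k := by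
  simpa using gcd_val_unit_mul (-1) x

lemma gcd_val_natCast_of_dvd {g : ℕ} (hg : g ∣ k) : (g : ZMod k).val.gcd k = g := by
  rw [val_natCast, ← Nat.gcd_rec, Nat.gcd_eq_right hg]

lemma exists_unit_mul_natCast_gcd_val (m : ZMod k) :
    ∃ u : (ZMod k)ˣ, m = u * (m.val.gcd k : ℕ) := by
  obtain ⟨g, hg, _, ⟨u, rfl⟩, rfl⟩ := eq_unit_mul_divisor m
  rw [gcd_val_unit_mul, gcd_val_natCast_of_dvd hg]
  exact ⟨u, rfl⟩

variable [NeZero k]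

lemma sum_val_eq_sum_range {M : Type*} [AddCommMonoid M] (F : ℕ → M) :
    ∑ z : ZMod k, F z.val = ∑ r ∈ range k, F r := by
  obtain ⟨n, rfl⟩ := Nat.exists_eq_succ_of_ne_zero (NeZero.ne k)
  exact Fin.sum_univ_eq_sum_range F (n + 1)

lemma gcd_val_mem_divisors_erase_iff (z : ZMod k) :
    z.val.gcd k ∈ k.divisors.erase k ↔ z ≠ 0 := by
  rw [mem_erase, Nat.mem_divisors, Ne, Nat.gcd_eq_right_iff_dvd, ← natCast_eq_zero_iff,
    natCast_zmod_val]
  simp [Nat.gcd_dvd_right, NeZero.ne k]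

lemma stdAddChar_natCast (n : ℕ) :
    stdAddChar (n : ZMod k) = Complex.exp (2 * Real.pi * Complex.I * n / k) := by
  simpa using stdAddChar_coe (N := k) n

end ZMod

lemma ramc_eq_sum_range (n d : ℕ) :
    ramc n d =
      ∑ q ∈ range d with q.gcd d = 1, Complex.exp (2 * Real.pi * Complex.I * q * n / d) := by
  rw [ramc, sum_filter, sum_filter]
  refine sum_Icc_one_eq_sum_range _ ?_
  have hperiod : Complex.exp (2 * Real.pi * Complex.I * d * n / d) = 1 := by
    rcases eq_or_ne d 0 with rfl | hd
    · simp
    · rw [show 2 * Real.pi * Complex.I * d * n / d = n * (2 * Real.pi * Complex.I) by field_simp]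
      exact Complex.exp_nat_mul_two_pi_mul_I n
  simp [hperiod, Nat.gcd_self]

/-- Vanishing at `0` encodes the restriction to proper divisors `lᵢ ≠ k`. -/
noncomputable def hzWeight (k : ℕ) (t : ℂ) (z : ZMod k) : ℂ :=
  if z = 0 then 0 else t ^ (k - z.val.gcd k)

lemma hzWeight_unit_mul {k : ℕ} (t : ℂ) (u : (ZMod k)ˣ) (z : ZMod k) :
    hzWeight k t (u * z) = hzWeight k t z := by
  simp only [hzWeight, Units.mul_right_eq_zero, gcd_val_unit_mul]

section

variable {k : ℕ} [NeZero k]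

lemma hz_div_eq_sum_stdAddChar_mul_hzWeight {g : ℕ} (hg : g ∣ k) (t : ℂ) :
    hz k (k / g) t = ∑ z, stdAddChar ((g : ZMod k) * z) * hzWeight k t z := by
  have hk : k ≠ 0 := NeZero.ne k
  have hg0 : (g : ℂ) ≠ 0 := Nat.cast_ne_zero.2 (ne_zero_of_dvd_ne_zero hk hg)
  have hsupp : Icc 1 (k - 1) = (range k).filter (· ≠ 0) := by
    ext r; simp only [mem_Icc, mem_filter, mem_range]; omega
  rw [hz, hsupp, sum_filter, ← sum_val_eq_sum_range]
  refine sum_congr rfl fun z _ => ?_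
  have hψ : stdAddChar ((g : ZMod k) * z) =
      Complex.exp (2 * Real.pi * Complex.I * (g * z.val) / k) := by
    rw [← Nat.cast_mul, ← stdAddChar_natCast, Nat.cast_mul, natCast_zmod_val]
  rw [hψ, hzWeight, Nat.gcd_comm, Nat.cast_div hg hg0]
  simp only [ne_eq, ZMod.val_eq_zero]
  split_ifs
  · rw [mul_zero]
  · congr 2
    field_simp

lemma sum_stdAddChar_mul_hzWeight (t : ℂ) (m : ZMod k) :
    ∑ z, stdAddChar (m * z) * hzWeight k t z = hz k (k / m.val.gcd k) t := by
  obtain ⟨u, hu⟩ := exists_unit_mul_natCast_gcd_val m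
  rw [hz_div_eq_sum_stdAddChar_mul_hzWeight (Nat.gcd_dvd_right _ _)]
  conv_lhs => rw [hu]
  exact AddChar.sum_unit_mul_mul _ (hzWeight_unit_mul t) u _

lemma sum_prod_filter_sum_eq_stdAddChar (w : ZMod k → ℂ) (b : ZMod k) (s : ℕ) :
    ∑ x : Fin s → ZMod k with ∑ i, x i = b, ∏ i, w (x i)
      = (k : ℂ)⁻¹ * ∑ m, stdAddChar (m * b) * (∑ z, stdAddChar (-m * z) * w z) ^ s := by
  have hk : (k : ℂ) ≠ 0 := Nat.cast_ne_zero.2 (NeZero.ne k)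
  have hind (y : ZMod k) :
      (if y = b then 1 else 0) = (k : ℂ)⁻¹ * ∑ m, stdAddChar (m * (b - y)) := by
    rw [AddChar.sum_mulShift _ (isPrimitive_stdAddChar k), ZMod.card]
    by_cases h : y = b
    · simp [h, hk]
    · simp [h, sub_eq_zero, Ne.symm h]
  have hchar (m : ZMod k) (x : Fin s → ZMod k) :
      stdAddChar (m * (b - ∑ i, x i)) = stdAddChar (m * b) * ∏ i, stdAddChar (-m * x i) := by
    rw [← AddChar.map_sum_eq_prod, ← AddChar.map_add_eq_mul, mul_sub, mul_sum, sub_eq_add_neg,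
      ← sum_neg_distrib]
    simp only [neg_mul]
  calc ∑ x : Fin s → ZMod k with ∑ i, x i = b, ∏ i, w (x i)
      = ∑ x : Fin s → ZMod k, (if ∑ i, x i = b then 1 else 0) * ∏ i, w (x i) := by
        rw [sum_filter]; simp only [ite_mul, one_mul, zero_mul]
    _ = (k : ℂ)⁻¹ * ∑ m, stdAddChar (m * b) *
          ∑ x : Fin s → ZMod k, ∏ i, (stdAddChar (-m * x i) * w (x i)) := by
        simp_rw [hind, hchar, prod_mul_distrib, mul_sum, sum_mul, mul_assoc]
        rw [sum_comm]
    _ = _ := by simp_rw [Fintype.sum_pow]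

lemma sum_Nk_mul_pow_eq_sum_prod_hzWeight (b s : ℕ) (t : ℂ) :
    ∑ l ∈ Fintype.piFinset (fun _ : Fin s => k.divisors.erase k),
        (Nk k b s l : ℂ) * t ^ (k * s - ∑ i, l i)
      = ∑ x : Fin s → ZMod k with ∑ i, x i = (b : ZMod k), ∏ i, hzWeight k t (x i) := by
  set gcds : (Fin s → ZMod k) → Fin s → ℕ := fun x i => (x i).val.gcd k
  have hNk (l : Fin s → ℕ) :
      Nk k b s l =
        #{x ∈ (univ.filter fun x : Fin s → ZMod k => ∑ i, x i = (b : ZMod k)) | gcds x = l} := by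
    rw [Nk, Fintype.card_subtype, filter_filter]
    simp [gcds, funext_iff]
  have hprod (x : Fin s → ZMod k) :
      ∏ i, hzWeight k t (x i)
        = if gcds x ∈ Fintype.piFinset (fun _ => k.divisors.erase k)
          then t ^ (k * s - ∑ i, gcds x i) else 0 := by
    simp only [hzWeight, ← ite_not (x _ = 0), Fintype.prod_ite_zero, Fintype.mem_piFinset, gcds,
      gcd_val_mem_divisors_erase_iff, ne_eq]
    rw [prod_pow_sub_eq_pow_mul_card_sub_sum _ _ fun i => Nat.gcd_le_right _ (NeZero.pos k),
      Fintype.card_fin]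
    congr
  simp_rw [hNk, ← nsmul_eq_mul, ← sum_const]
  rw [sum_fiberwise_eq_sum_filter']
  simp_rw [hprod]
  rw [← sum_filter, filter_filter]

lemma sum_stdAddChar_filter_gcd_val_eq_ramc (n : ℕ) {g : ℕ} (hg : g ∣ k) :
    ∑ m : ZMod k with m.val.gcd k = g, stdAddChar (m * (n : ZMod k)) = ramc n (k / g) := by
  obtain ⟨d, hd⟩ := hg
  have hg0 : 0 < g := Nat.pos_of_ne_zero (by rintro rfl; simp_all)
  have hval {q : ℕ} (hq : q < d) : ((g * q : ℕ) : ZMod k).val = g * q :=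
    val_natCast_of_lt (by rw [hd]; exact Nat.mul_lt_mul_of_pos_left hq hg0)
  rw [show k / g = d by rw [hd, Nat.mul_div_cancel_left _ hg0], ramc_eq_sum_range]
  symm
  -- the `m` with `gcd(m, k) = g` are the `g * q` with `q < d` coprime to `d`
  refine sum_nbij' (fun q => ((g * q : ℕ) : ZMod k)) (fun m => m.val / g) ?_ ?_ ?_ ?_ ?_
  · intro q hq
    rw [mem_filter, mem_range] at hq
    refine mem_filter.2 ⟨mem_univ _, ?_⟩
    rw [hval hq.1, hd, Nat.gcd_mul_left, hq.2, mul_one]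
  · intro m hm
    rw [mem_filter] at hm
    obtain ⟨q, hq⟩ : g ∣ m.val := hm.2 ▸ Nat.gcd_dvd_left _ _
    have hgcd := hm.2
    rw [hq, hd, Nat.gcd_mul_left, Nat.mul_eq_left hg0.ne'] at hgcd
    rw [mem_filter, mem_range, hq, Nat.mul_div_cancel_left _ hg0]
    refine ⟨Nat.lt_of_mul_lt_mul_left (a := g) ?_, hgcd⟩
    rw [← hq, ← hd]
    exact val_lt m
  · intro q hq
    rw [mem_filter, mem_range] at hq
    simp only [hval hq.1, Nat.mul_div_cancel_left _ hg0]
  · intro m hm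
    rw [mem_filter] at hm
    simp only [Nat.mul_div_cancel' (hm.2 ▸ Nat.gcd_dvd_left _ _ : g ∣ m.val), natCast_zmod_val]
  · intro q _
    rw [← Nat.cast_mul, stdAddChar_natCast, hd]
    push_cast
    congr 1
    field_simp [hg0.ne']

end

theorem stmt7_general (k b s : ℕ) [NeZero k] (t : ℂ) :
    ∑ l ∈ Fintype.piFinset (fun _ : Fin s => k.divisors.erase k),
        (Nk k b s l : ℂ) * t ^ (k * s - ∑ i, l i)
      = (1 / (k : ℂ)) * ∑ d ∈ k.divisors, ramc b d * (hz k d t) ^ s := by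
  have hmaps : ∀ m ∈ (univ : Finset (ZMod k)), m.val.gcd k ∈ k.divisors := fun _ _ =>
    Nat.mem_divisors.2 ⟨Nat.gcd_dvd_right _ _, NeZero.ne k⟩
  rw [sum_Nk_mul_pow_eq_sum_prod_hzWeight, sum_prod_filter_sum_eq_stdAddChar, one_div,
    ← sum_fiberwise_of_maps_to hmaps]
  conv_rhs => rw [← Nat.sum_div_divisors]
  simp_rw [sum_stdAddChar_mul_hzWeight, gcd_val_neg]
  congr 1
  refine sum_congr rfl fun g hg => ?_
  rw [← sum_stdAddChar_filter_gcd_val_eq_ramc b (Nat.dvd_of_mem_divisors hg), sum_mul]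
  exact sum_congr rfl fun m hm => by rw [(mem_filter.1 hm).2]

theorem stmt7 (k b s : ℕ) [NeZero k] (hb : 0 < b) (hs : 0 < s) (t : ℂ) :
    ∑ l ∈ Fintype.piFinset (fun _ : Fin s => k.divisors.erase k),
        (Nk k b s l : ℂ) * t ^ (k * s - ∑ i, l i)
      = (1 / (k : ℂ)) * ∑ d ∈ k.divisors, ramc b d * (hz k d t) ^ s :=
  stmt7_general k b s t
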